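/- arXiv:1908.09196 — 3 statements merged into one kernel-verified Lean document; each statement's English description precedes it below -/
import Mathlib

section
/- If a polynomial F ∈ ℂ[y,p] satisfies F(x + c·x², 1 + 2·c·x) = 0 in the formal power series ring ℂ[[x]] for every c ∈ ℂ, then F = 0. In other words, the one-parameter family y_c(x) = x + c·x² (c ∈ ℂ) is not a family of solutions of any nonzero autonomous first-order algebraic ordinary differential equation F(y, y') = 0. -/
/-!
Evaluating `y_c` and `y_c'` at a point `x` gives `(x + c x², 1 + 2 c x)`, and every `(a, b)` with
`a ≠ 0`, `b ≠ -1` arises this way, from `x = 2a / (b + 1)` and `c = (b² - 1) / 4a`. So `F` vanishes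
on a product of two cofinite subsets of the field, and a polynomial vanishing on such a box is zero.
-/

@[simp, norm_cast]
theorem Polynomial.coe_ofNat {R : Type*} [Semiring R] (n : ℕ) [n.AtLeastTwo] :
    ((ofNat(n) : Polynomial R) : PowerSeries R) = OfNat.ofNat n :=
  map_ofNat Polynomial.coeToPowerSeries.ringHom n

theorem exists_add_mul_sq_eq_and_one_add_two_mul_eq {K : Type*} [Field K] (h2 : (2 : K) ≠ 0)
    {a b : K} (ha : a ≠ 0) (hb : b ≠ -1) :
    ∃ c x : K, x + c * x ^ 2 = a ∧ 1 + 2 * c * x = b := by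
  have hb1 : b + 1 ≠ 0 := by rwa [Ne, add_eq_zero_iff_eq_neg]
  refine ⟨(b - 1) * (b + 1) / (2 * 2 * a), 2 * a / (b + 1), ?_, ?_⟩ <;> field_simp <;> ring

namespace MvPolynomial

theorem coe_aeval_polynomial {σ R : Type*} [CommSemiring R]
    (v : σ → Polynomial R) (F : MvPolynomial σ R) :
    ((aeval v F : Polynomial R) : PowerSeries R) = aeval (fun i => (v i : PowerSeries R)) F := by
  simpa [Polynomial.coeToPowerSeries.algHom_apply, PowerSeries.map_id] using
    comp_aeval_apply (f := v) (Polynomial.coeToPowerSeries.algHom R) F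

theorem polynomial_eval_aeval {σ R : Type*} [CommSemiring R]
    (v : σ → Polynomial R) (F : MvPolynomial σ R) (x : R) :
    (aeval v F).eval x = eval (fun i => (v i).eval x) F := by
  simpa using comp_aeval_apply (f := v) (Polynomial.aeval x) F

variable {K : Type*} [Field K]

theorem eval_add_mul_sq_eq_zero_of_aeval_eq_zero {F : MvPolynomial (Fin 2) K} {c : K}
    (hc : aeval ![PowerSeries.X + PowerSeries.C c * PowerSeries.X ^ 2,
        1 + 2 * PowerSeries.C c * PowerSeries.X] F = (0 : PowerSeries K)) (x : K) :
    eval ![x + c * x ^ 2, 1 + 2 * c * x] F = 0 := by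
  set v : Fin 2 → Polynomial K :=
    ![Polynomial.X + Polynomial.C c * Polynomial.X ^ 2, 1 + 2 * Polynomial.C c * Polynomial.X]
  have hcoe : (fun i => (v i : PowerSeries K)) =
      ![PowerSeries.X + PowerSeries.C c * PowerSeries.X ^ 2,
        1 + 2 * PowerSeries.C c * PowerSeries.X] := by
    ext1 i; fin_cases i <;> simp [v]
  have hpoly : aeval v F = 0 := by
    rw [← Polynomial.coe_eq_zero_iff, coe_aeval_polynomial, hcoe, hc]
  have heval : (fun i => (v i).eval x) = ![x + c * x ^ 2, 1 + 2 * c * x] := by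
    ext1 i; fin_cases i <;> simp [v]
  rw [← heval, ← polynomial_eval_aeval, hpoly, Polynomial.eval_zero]

theorem eq_zero_of_forall_aeval_X_add_C_mul_X_sq_eq_zero [Infinite K] (h2 : (2 : K) ≠ 0)
    {F : MvPolynomial (Fin 2) K}
    (hsol : ∀ c : K, aeval ![PowerSeries.X + PowerSeries.C c * PowerSeries.X ^ 2,
        1 + 2 * PowerSeries.C c * PowerSeries.X] F = (0 : PowerSeries K)) :
    F = 0 := by
  refine funext_set ![{0}ᶜ, {-1}ᶜ]
    (fun i => by fin_cases i <;> exact (Set.finite_singleton _).infinite_compl) fun v hv => ?_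
  obtain ⟨c, x, ha, hb⟩ :=
    exists_add_mul_sq_eq_and_one_add_two_mul_eq h2 (hv 0 trivial) (hv 1 trivial)
  have hv_eq : v = ![x + c * x ^ 2, 1 + 2 * c * x] := by
    ext1 i; fin_cases i <;> simp [ha, hb]
  rw [hv_eq, map_zero]
  exact eval_add_mul_sq_eq_zero_of_aeval_eq_zero (hsol c) x

end MvPolynomial

/-- The one-parameter family `y_c(x) = x + c x²` is not a family of solutions of any
nonzero autonomous first-order AODE: if `F ∈ ℂ[y, p]` satisfies
`F(x + c x², 1 + 2 c x) = 0` in `ℂ[[x]]` for every `c ∈ ℂ`, then `F = 0`.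
Here variable `0` of `F` plays the role of `y` and variable `1` that of `p = y'`. -/
theorem family_not_solution_of_autonomous_ode
    (F : MvPolynomial (Fin 2) ℂ)
    (hsol : ∀ c : ℂ,
      MvPolynomial.aeval
        ![PowerSeries.X + PowerSeries.C c * PowerSeries.X ^ 2,
          1 + 2 * PowerSeries.C c * PowerSeries.X] F = (0 : PowerSeries ℂ)) :
    F = 0 :=
  MvPolynomial.eq_zero_of_forall_aeval_X_add_C_mul_X_sq_eq_zero two_ne_zero hsol
end

section
/- Let L be a subfield of ℂ, let ν ≥ 1 be an integer, and let A, B ∈ ℂ[[u]] be formal power series with ord(A) = ν − 1, B(0) ≠ 0, and all coefficients of A and B lying in L. Then every formal power series s ∈ ℂ[[t]] with ord(s) = 1 satisfying A(s(t))·s'(t) = t^{ν−1}·B(s(t)) has (coeff_1(s))^ν ∈ L, and every coefficient of s lies in the subfield L(coeff_1(s)) of ℂ generated by L and coeff_1(s). -/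
/-
Write `c = coeff₁ s` and `Φ(s) = A(s) s' - t^{ν-1} B(s)`. The coefficient of `t^{ν-1}` in `Φ(s)`
is `coeff_{ν-1}(A) · c^ν - B(0)`. Beyond that the equation is triangular: if `u` agrees with `s`
up to degree `n ≥ 1`, then `s^k - u^k = (s - u)(s^{k-1} + ⋯ + u^{k-1})` starts in degree `n + k`
with coefficient `k c^{k-1} (s_{n+1} - u_{n+1})`, so the coefficients of `t^{ν-1+n}` in `Φ(s)`
and `Φ(u)` differ by `(ν + n) · coeff_{ν-1}(A) · c^{ν-1} · (s_{n+1} - u_{n+1})`. Taking for `u`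
the truncation of `s` at degree `n` expresses `s_{n+1}` rationally over `L(c)` in terms of
`s_1, …, s_n`.
-/

/-- Composition `A(s(t))` of formal power series (intended for `s` with zero
constant term, in which case `coeff n (s^k) = 0` for `k > n`). -/
noncomputable def pscomp (A s : PowerSeries ℂ) : PowerSeries ℂ :=
  PowerSeries.mk fun n => ∑ k ∈ Finset.range (n + 1),
    (PowerSeries.coeff k A) * PowerSeries.coeff n (s ^ k)

open PowerSeries Finset

section LeadingCoeff

variable {R : Type*} [CommSemiring R]

theorem coeff_add_mul_of_X_pow_dvd {f g : R⟦X⟧} {a b : ℕ} (hf : X ^ a ∣ f) (hg : X ^ b ∣ g) :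
    coeff (a + b) (f * g) = coeff a f * coeff b g := by
  obtain ⟨f, rfl⟩ := hf
  obtain ⟨g, rfl⟩ := hg
  rw [mul_mul_mul_comm, ← pow_add, coeff_X_pow_mul', coeff_X_pow_mul', coeff_X_pow_mul']
  simp [coeff_zero_eq_constantCoeff]

theorem coeff_pow_of_X_dvd {f : R⟦X⟧} (hf : X ∣ f) (k : ℕ) : coeff k (f ^ k) = coeff 1 f ^ k := by
  induction k with
  | zero => simp
  | succ k ih =>
    rw [pow_succ, coeff_add_mul_of_X_pow_dvd (pow_dvd_pow_of_dvd hf k) (by rwa [pow_one]), ih,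
      pow_succ]

theorem X_pow_dvd_derivative {f : R⟦X⟧} {n : ℕ} (hf : X ^ (n + 1) ∣ f) : X ^ n ∣ d⁄dX R f :=
  X_pow_dvd_iff.2 fun d hd => by
    rw [coeff_derivative, X_pow_dvd_iff.1 hf (d + 1) (by omega), zero_mul]

end LeadingCoeff

section PowSubPow

variable {R : Type*} [CommRing R] {s u : R⟦X⟧} {n : ℕ}

theorem X_pow_dvd_geom_sum₂ (hs : X ∣ s) (hu : X ∣ u) (k : ℕ) :
    X ^ k ∣ ∑ i ∈ range (k + 1), s ^ i * u ^ (k - i) :=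
  dvd_sum fun i hi => by
    obtain ⟨j, rfl⟩ := Nat.exists_eq_add_of_le (Nat.lt_succ_iff.1 (mem_range.1 hi))
    rw [Nat.add_sub_cancel_left, pow_add]
    exact mul_dvd_mul (pow_dvd_pow_of_dvd hs i) (pow_dvd_pow_of_dvd hu j)

theorem coeff_geom_sum₂ (hs : X ∣ s) (hu : X ∣ u) (h1 : coeff 1 s = coeff 1 u) (k : ℕ) :
    coeff k (∑ i ∈ range (k + 1), s ^ i * u ^ (k - i)) = (k + 1) * coeff 1 s ^ k := by
  rw [map_sum]
  have hterm : ∀ i ∈ range (k + 1), coeff k (s ^ i * u ^ (k - i)) = coeff 1 s ^ k := by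
    intro i hi
    obtain ⟨j, rfl⟩ := Nat.exists_eq_add_of_le (Nat.lt_succ_iff.1 (mem_range.1 hi))
    rw [Nat.add_sub_cancel_left, coeff_add_mul_of_X_pow_dvd (pow_dvd_pow_of_dvd hs i)
      (pow_dvd_pow_of_dvd hu j), coeff_pow_of_X_dvd hs, coeff_pow_of_X_dvd hu, ← h1, pow_add]
  rw [sum_congr rfl hterm, sum_const, card_range, nsmul_eq_mul]
  push_cast
  ring

theorem X_pow_dvd_pow_sub_pow (hs : X ∣ s) (hu : X ∣ u) (hsu : X ^ (n + 1) ∣ s - u) (k : ℕ) :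
    X ^ (n + k) ∣ s ^ k - u ^ k := by
  cases k with
  | zero => simp
  | succ k =>
    rw [← geom_sum₂_mul, Nat.add_sub_cancel, show n + (k + 1) = k + (n + 1) by omega, pow_add]
    exact mul_dvd_mul (X_pow_dvd_geom_sum₂ hs hu k) hsu

theorem coeff_pow_sub_pow (hs : X ∣ s) (hu : X ∣ u) (hsu : X ^ (n + 1) ∣ s - u)
    (h1 : coeff 1 s = coeff 1 u) (k : ℕ) :
    coeff (n + k) (s ^ k - u ^ k) =
      k * coeff 1 s ^ (k - 1) * (coeff (n + 1) s - coeff (n + 1) u) := by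
  cases k with
  | zero => simp
  | succ k =>
    rw [← geom_sum₂_mul, Nat.add_sub_cancel, show n + (k + 1) = k + (n + 1) by omega,
      coeff_add_mul_of_X_pow_dvd (X_pow_dvd_geom_sum₂ hs hu k) hsu, coeff_geom_sum₂ hs hu h1,
      map_sub]
    push_cast
    ring

end PowSubPow

section Composition

variable {A s u : ℂ⟦X⟧} {m n : ℕ}

theorem coeff_pscomp (A s : ℂ⟦X⟧) (d : ℕ) :
    coeff d (pscomp A s) = ∑ k ∈ range (d + 1), coeff k A * coeff d (s ^ k) :=
  coeff_mk _ _

theorem coeff_pscomp_sub_pscomp (A s u : ℂ⟦X⟧) (d : ℕ) :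
    coeff d (pscomp A s - pscomp A u) =
      ∑ k ∈ range (d + 1), coeff k A * coeff d (s ^ k - u ^ k) := by
  simp only [map_sub, coeff_pscomp, mul_sub, sum_sub_distrib]

theorem sum_coeff_mul_coeff_eq_of_X_pow_dvd (hA : X ^ m ∣ A) {F : ℕ → ℂ⟦X⟧} {e d : ℕ}
    (hF : ∀ k, X ^ (e + k) ∣ F k) (hd : d ≤ e + m) :
    ∑ k ∈ range (d + 1), coeff k A * coeff d (F k) = coeff m A * coeff d (F m) := by
  refine sum_eq_single m (fun k _ hkm => ?_) fun hm => ?_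
  · rcases lt_or_gt_of_ne hkm with hk | hk
    · rw [X_pow_dvd_iff.1 hA k hk, zero_mul]
    · rw [X_pow_dvd_iff.1 (hF k) d (by omega), mul_zero]
  · rw [X_pow_dvd_iff.1 (hF m) d (by simp only [mem_range] at hm; omega), mul_zero]

theorem X_pow_dvd_pscomp (hA : X ^ m ∣ A) (hu : X ∣ u) : X ^ m ∣ pscomp A u := by
  have hF (k : ℕ) : X ^ (0 + k) ∣ u ^ k := by rw [zero_add]; exact pow_dvd_pow_of_dvd hu k
  refine X_pow_dvd_iff.2 fun d hd => ?_
  rw [coeff_pscomp, sum_coeff_mul_coeff_eq_of_X_pow_dvd hA hF (by omega),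
    X_pow_dvd_iff.1 (hF m) d (by omega), mul_zero]

theorem coeff_pscomp_of_X_pow_dvd (hA : X ^ m ∣ A) (hu : X ∣ u) :
    coeff m (pscomp A u) = coeff m A * coeff 1 u ^ m := by
  have hF (k : ℕ) : X ^ (0 + k) ∣ u ^ k := by rw [zero_add]; exact pow_dvd_pow_of_dvd hu k
  rw [coeff_pscomp, sum_coeff_mul_coeff_eq_of_X_pow_dvd hA hF (by omega), coeff_pow_of_X_dvd hu]

theorem X_pow_dvd_pscomp_sub_pscomp (hA : X ^ m ∣ A) (hs : X ∣ s) (hu : X ∣ u)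
    (hsu : X ^ (n + 1) ∣ s - u) : X ^ (n + m) ∣ pscomp A s - pscomp A u := by
  have hF := X_pow_dvd_pow_sub_pow hs hu hsu
  refine X_pow_dvd_iff.2 fun d hd => ?_
  rw [coeff_pscomp_sub_pscomp, sum_coeff_mul_coeff_eq_of_X_pow_dvd hA hF hd.le,
    X_pow_dvd_iff.1 (hF m) d hd, mul_zero]

theorem coeff_pscomp_sub_pscomp_of_X_pow_dvd (hA : X ^ m ∣ A) (hs : X ∣ s) (hu : X ∣ u)
    (hsu : X ^ (n + 1) ∣ s - u) (h1 : coeff 1 s = coeff 1 u) :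
    coeff (n + m) (pscomp A s - pscomp A u) =
      coeff m A * (m * coeff 1 s ^ (m - 1) * (coeff (n + 1) s - coeff (n + 1) u)) := by
  rw [coeff_pscomp_sub_pscomp, sum_coeff_mul_coeff_eq_of_X_pow_dvd hA
    (X_pow_dvd_pow_sub_pow hs hu hsu) le_rfl, coeff_pow_sub_pow hs hu hsu h1]

end Composition

section Defect

noncomputable def assocDefect (A B : ℂ⟦X⟧) (μ : ℕ) (s : ℂ⟦X⟧) : ℂ⟦X⟧ :=
  pscomp A s * d⁄dX ℂ s - X ^ μ * pscomp B s

variable {A B s u : ℂ⟦X⟧} {μ n : ℕ}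

theorem coeff_assocDefect_of_X_pow_dvd (hA : X ^ μ ∣ A) (hs : X ∣ s) :
    coeff μ (assocDefect A B μ s) = coeff μ A * coeff 1 s ^ (μ + 1) - coeff 0 B := by
  have hlhs := coeff_add_mul_of_X_pow_dvd (X_pow_dvd_pscomp hA hs) (by simp : X ^ 0 ∣ d⁄dX ℂ s)
  have hrhs : coeff μ (X ^ μ * pscomp B s) = coeff 0 B := by
    simpa [coeff_pscomp] using coeff_X_pow_mul (pscomp B s) μ 0
  rw [add_zero, coeff_pscomp_of_X_pow_dvd hA hs, coeff_derivative] at hlhs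
  rw [assocDefect, map_sub, hlhs, hrhs, pow_succ]
  ring

theorem coeff_assocDefect_sub_assocDefect (hA : X ^ μ ∣ A) (hs : X ∣ s) (hu : X ∣ u)
    (hsu : X ^ (n + 1) ∣ s - u) (h1 : coeff 1 s = coeff 1 u) :
    coeff (μ + n) (assocDefect A B μ s - assocDefect A B μ u) =
      (μ + n + 1) * coeff μ A * coeff 1 s ^ μ * (coeff (n + 1) s - coeff (n + 1) u) := by
  have hsplit : assocDefect A B μ s - assocDefect A B μ u =
      (pscomp A s - pscomp A u) * d⁄dX ℂ s + pscomp A u * d⁄dX ℂ (s - u) -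
        X ^ μ * (pscomp B s - pscomp B u) := by
    simp only [assocDefect, map_sub]
    ring
  have hdiffA := coeff_add_mul_of_X_pow_dvd (X_pow_dvd_pscomp_sub_pscomp hA hs hu hsu)
    (by simp : X ^ 0 ∣ d⁄dX ℂ s)
  rw [add_zero, coeff_pscomp_sub_pscomp_of_X_pow_dvd hA hs hu hsu h1, coeff_derivative,
    add_comm n μ] at hdiffA
  have hdiffDeriv := coeff_add_mul_of_X_pow_dvd (X_pow_dvd_pscomp hA hu) (X_pow_dvd_derivative hsu)
  rw [coeff_pscomp_of_X_pow_dvd hA hu, coeff_derivative, ← h1] at hdiffDeriv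
  have hdiffB := coeff_X_pow_mul (pscomp B s - pscomp B u) μ n
  rw [← add_zero n, coeff_pscomp_sub_pscomp_of_X_pow_dvd (by simp : X ^ 0 ∣ B)
    hs hu hsu h1, add_zero, add_comm n μ] at hdiffB
  have hpow : (μ : ℂ) * coeff 1 s ^ (μ - 1) * coeff 1 s = μ * coeff 1 s ^ μ := by
    rcases Nat.eq_zero_or_pos μ with rfl | hμ
    · simp
    · rw [mul_assoc, pow_sub_one_mul hμ.ne']
  rw [hsplit, map_sub, map_add, hdiffA, hdiffDeriv, hdiffB, map_sub, zero_add]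
  push_cast
  linear_combination (coeff μ A * (coeff (n + 1) s - coeff (n + 1) u)) * hpow

end Defect

section CoeffSubring

variable {R : Type*} [CommRing R]

noncomputable def powerSeriesOver (S : Subring R) : Subring R⟦X⟧ := (map S.subtype).range

variable {S : Subring R}

theorem mem_powerSeriesOver {f : R⟦X⟧} : f ∈ powerSeriesOver S ↔ ∀ i, coeff i f ∈ S := by
  constructor
  · rintro ⟨g, rfl⟩ i
    rw [coeff_map]
    exact (coeff i g).2
  · exact fun h => ⟨mk fun i => ⟨coeff i f, h i⟩, by ext i; simp⟩

theorem X_mem_powerSeriesOver : X ∈ powerSeriesOver S := ⟨X, map_X _⟩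

theorem derivative_mem_powerSeriesOver {f : R⟦X⟧} (hf : f ∈ powerSeriesOver S) :
    d⁄dX R f ∈ powerSeriesOver S :=
  mem_powerSeriesOver.2 fun i => by
    rw [coeff_derivative]
    exact mul_mem (mem_powerSeriesOver.1 hf _) (add_mem (natCast_mem S i) (one_mem S))

end CoeffSubring

section Solutions

variable {A B s : ℂ⟦X⟧} {μ : ℕ} {S : Subring ℂ} {K : Subfield ℂ}

theorem pscomp_mem_powerSeriesOver (hA : A ∈ powerSeriesOver S) (hs : s ∈ powerSeriesOver S) :
    pscomp A s ∈ powerSeriesOver S :=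
  mem_powerSeriesOver.2 fun d => by
    rw [coeff_pscomp]
    exact sum_mem fun k _ =>
      mul_mem (mem_powerSeriesOver.1 hA k) (mem_powerSeriesOver.1 (pow_mem hs k) d)

theorem assocDefect_mem_powerSeriesOver (hA : A ∈ powerSeriesOver S)
    (hB : B ∈ powerSeriesOver S) (hs : s ∈ powerSeriesOver S) :
    assocDefect A B μ s ∈ powerSeriesOver S :=
  sub_mem (mul_mem (pscomp_mem_powerSeriesOver hA hs) (derivative_mem_powerSeriesOver hs))
    (mul_mem (pow_mem X_mem_powerSeriesOver μ) (pscomp_mem_powerSeriesOver hB hs))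

theorem coeff_succ_mem_of_assocDefect_eq_zero (hAK : A ∈ powerSeriesOver K.toSubring)
    (hBK : B ∈ powerSeriesOver K.toSubring) (hA : X ^ μ ∣ A) (ha : coeff μ A ≠ 0) (hs : X ∣ s)
    (hc : coeff 1 s ≠ 0) (hcK : coeff 1 s ∈ K) (h : assocDefect A B μ s = 0) {n : ℕ} (hn : 1 ≤ n)
    (hlow : ∀ i ≤ n, coeff i s ∈ K) : coeff (n + 1) s ∈ K := by
  set u := ((trunc (n + 1) s : Polynomial ℂ) : ℂ⟦X⟧) with hu_def
  have hcoeff_u (i : ℕ) : coeff i u = if i < n + 1 then coeff i s else 0 := by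
    rw [hu_def, Polynomial.coeff_coe, coeff_trunc]
  have hsu : X ^ (n + 1) ∣ s - u :=
    ⟨_, sub_eq_iff_eq_add.2 (eq_X_pow_mul_shift_add_trunc (n + 1) s)⟩
  have hu : X ∣ u := (dvd_sub_right hs).1 (dvd_trans (dvd_pow_self X n.succ_ne_zero) hsu)
  have h1 : coeff 1 s = coeff 1 u := by rw [hcoeff_u, if_pos (by omega)]
  have huK : u ∈ powerSeriesOver K.toSubring := mem_powerSeriesOver.2 fun i => by
    rw [hcoeff_u]
    split_ifs with hi
    exacts [hlow i (by omega), zero_mem _]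
  have key := coeff_assocDefect_sub_assocDefect (B := B) hA hs hu hsu h1
  rw [h, zero_sub, map_neg, hcoeff_u, if_neg (lt_irrefl _), sub_zero] at key
  have hne : (μ + n + 1 : ℂ) * coeff μ A * coeff 1 s ^ μ ≠ 0 :=
    mul_ne_zero (mul_ne_zero (by exact_mod_cast Nat.succ_ne_zero (μ + n)) ha) (pow_ne_zero _ hc)
  rw [eq_div_of_mul_eq hne (by linear_combination -key : coeff (n + 1) s * _ =
    -coeff (μ + n) (assocDefect A B μ u))]
  refine div_mem (neg_mem (mem_powerSeriesOver.1 (assocDefect_mem_powerSeriesOver hAK hBK huK) _))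
    (mul_mem (mul_mem ?_ (mem_powerSeriesOver.1 hAK μ)) (pow_mem hcK μ))
  exact_mod_cast natCast_mem K (μ + n + 1)

theorem coeff_mem_of_assocDefect_eq_zero (hAK : A ∈ powerSeriesOver K.toSubring)
    (hBK : B ∈ powerSeriesOver K.toSubring) (hA : X ^ μ ∣ A) (ha : coeff μ A ≠ 0) (hs : X ∣ s)
    (hc : coeff 1 s ≠ 0) (hcK : coeff 1 s ∈ K) (h : assocDefect A B μ s = 0) (i : ℕ) :
    coeff i s ∈ K := by
  induction i using Nat.strong_induction_on with
  | _ i ih =>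
    match i, ih with
    | 0, _ => rw [coeff_zero_eq_constantCoeff_apply, X_dvd_iff.1 hs]; exact zero_mem K
    | 1, _ => exact hcK
    | n + 2, ih =>
      exact coeff_succ_mem_of_assocDefect_eq_zero hAK hBK hA ha hs hc hcK h (n := n + 1)
        (by omega) fun j hj => ih j (by omega)

end Solutions

theorem assoc_equation_coefficients_field_general
    (L : Subfield ℂ) (ν : ℕ) (A B : PowerSeries ℂ)
    (hA : A.order = ((ν - 1 : ℕ)))
    (hAL : ∀ i : ℕ, PowerSeries.coeff i A ∈ L)
    (hBL : ∀ i : ℕ, PowerSeries.coeff i B ∈ L) :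
    ∀ s : PowerSeries ℂ, s.order = 1 →
      pscomp A s * s.derivativeFun = PowerSeries.X ^ (ν - 1) * pscomp B s →
      (PowerSeries.coeff 1 s) ^ ν ∈ L ∧
      ∀ i : ℕ, PowerSeries.coeff i s ∈
        Subfield.closure ((L : Set ℂ) ∪ {PowerSeries.coeff 1 s}) := by
  intro s hs heq
  obtain ⟨hc, hs0⟩ := order_eq_nat.1 (by exact_mod_cast hs : s.order = (1 : ℕ))
  obtain ⟨ha, hA0⟩ := order_eq_nat.1 hA
  have hsX : X ∣ s := X_dvd_iff.2 (by simpa using hs0 0 one_pos)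
  have hAX : X ^ (ν - 1) ∣ A := X_pow_dvd_iff.2 hA0
  have hΦ : assocDefect A B (ν - 1) s = 0 := sub_eq_zero.2 heq
  have hLK : L ≤ Subfield.closure ((L : Set ℂ) ∪ {coeff 1 s}) :=
    fun x hx => Subfield.subset_closure (Or.inl hx)
  refine ⟨?_, coeff_mem_of_assocDefect_eq_zero (mem_powerSeriesOver.2 fun i => hLK (hAL i))
    (mem_powerSeriesOver.2 fun i => hLK (hBL i)) hAX ha hsX hc
    (Subfield.subset_closure (Or.inr rfl)) hΦ⟩
  have hbase := coeff_assocDefect_of_X_pow_dvd (B := B) hAX hsX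
  rw [hΦ, map_zero, eq_comm, sub_eq_zero] at hbase
  rcases Nat.eq_zero_or_pos ν with rfl | hν
  · simp [one_mem]
  · rw [Nat.sub_add_cancel hν] at hbase
    rw [eq_div_of_mul_eq ha ((mul_comm _ _).trans hbase)]
    exact div_mem (hBL 0) (hAL _)

/-- Rationality of solutions of the associated differential equation: if `A` and `B`
have all coefficients in a subfield `L ⊆ ℂ`, `ord A = ν - 1` and `B(0) ≠ 0`, then
every order-one solution `s` of `A(s(t)) s'(t) = t^{ν-1} B(s(t))` satisfies
`(coeff₁ s)^ν ∈ L`, and all coefficients of `s` lie in `L(coeff₁ s)`. -/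
theorem assoc_equation_coefficients_field
    (L : Subfield ℂ) (ν : ℕ) (hν : 1 ≤ ν) (A B : PowerSeries ℂ)
    (hA : A.order = ((ν - 1 : ℕ)))
    (hB : PowerSeries.constantCoeff B ≠ 0)
    (hAL : ∀ i : ℕ, PowerSeries.coeff i A ∈ L)
    (hBL : ∀ i : ℕ, PowerSeries.coeff i B ∈ L) :
    ∀ s : PowerSeries ℂ, s.order = 1 →
      pscomp A s * s.derivativeFun = PowerSeries.X ^ (ν - 1) * pscomp B s →
      (PowerSeries.coeff 1 s) ^ ν ∈ L ∧
      ∀ i : ℕ, PowerSeries.coeff i s ∈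
        Subfield.closure ((L : Set ℂ) ∪ {PowerSeries.coeff 1 s}) :=
  assoc_equation_coefficients_field_general L ν A B hA hAL hBL
end

section
/- Let n, k ≥ 1 be integers and let B1, B2 ∈ ℂ[[u]] be formal power series with B1(0) = B2(0) ≠ 0, and let m ≥ 1 be the least index with coeff_m(B1) ≠ coeff_m(B2). For i = 1, 2, let s_i ∈ ℂ[[t]] with ord(s_i) = 1 satisfy k·s_i(t)^{n−1}·s_i'(t) = n·t^{n−1}·B_i(s_i(t)), and assume coeff_1(s1) = coeff_1(s2). Then coeff_i(s1) = coeff_i(s2) for all i ≤ m, coeff_{m+1}(s1) ≠ coeff_{m+1}(s2), and consequently the power series s1(t)^k and s2(t)^k coincide in all coefficients of t^j with j < k + m but differ in the coefficient of t^{k+m}. -/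
namespace PowerSeries

open Finset

section CommRing

variable {R : Type*} [CommRing R]

/-- With `sᵢ = X tᵢ` and `t₁ - t₂ = X ^ r d`, the witness is `d ∑ t₁ ^ i t₂ ^ (K - 1 - i)`. -/
theorem exists_pow_sub_pow_eq_X_pow_mul {s₁ s₂ : R⟦X⟧} (h₁ : constantCoeff s₁ = 0)
    (h₂ : constantCoeff s₂ = 0) {r : ℕ} (hr : 1 ≤ r)
    (hagree : ∀ i ≤ r, coeff i s₁ = coeff i s₂) (K : ℕ) :
    ∃ h : R⟦X⟧, s₁ ^ K - s₂ ^ K = X ^ (K + r) * h ∧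
      constantCoeff h = K * coeff 1 s₁ ^ (K - 1) * (coeff (r + 1) s₁ - coeff (r + 1) s₂) := by
  obtain ⟨t₁, rfl⟩ := X_dvd_iff.mpr h₁
  obtain ⟨t₂, rfl⟩ := X_dvd_iff.mpr h₂
  simp only [coeff_succ_X_mul] at hagree ⊢
  obtain ⟨d, hd⟩ : X ^ r ∣ t₁ - t₂ := X_pow_dvd_iff.mpr fun i hi => by
    rw [map_sub, sub_eq_zero]
    simpa [coeff_succ_X_mul] using hagree (i + 1) (by omega)
  have ht : constantCoeff t₁ = constantCoeff t₂ := by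
    simpa [coeff_succ_X_mul] using hagree 1 hr
  refine ⟨d * ∑ i ∈ range K, t₁ ^ i * t₂ ^ (K - 1 - i), ?_, ?_⟩
  · rw [mul_pow, mul_pow, ← mul_sub, ← geom_sum₂_mul, hd]
    ring
  · have hd₀ : constantCoeff d = coeff r t₁ - coeff r t₂ := by
      simpa [← map_sub, hd] using (coeff_X_pow_mul d r 0).symm
    have hsum : ∑ i ∈ range K, constantCoeff t₁ ^ i * constantCoeff t₁ ^ (K - 1 - i)
        = K * constantCoeff t₁ ^ (K - 1) := by
      rw [← card_range K, ← nsmul_eq_mul, ← sum_const, card_range]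
      exact sum_congr rfl fun i hi => by
        rw [← pow_add, Nat.add_sub_cancel' (by simp at hi; omega)]
    simp only [map_mul, map_sum, map_pow, ← ht, hsum, hd₀, coeff_zero_eq_constantCoeff]
    ring

theorem coeff_pow_eq_coeff_pow_of_lt {s₁ s₂ : R⟦X⟧} (h₁ : constantCoeff s₁ = 0)
    (h₂ : constantCoeff s₂ = 0) {r : ℕ} (hr : 1 ≤ r)
    (hagree : ∀ i ≤ r, coeff i s₁ = coeff i s₂) {K j : ℕ} (hj : j < K + r) :
    coeff j (s₁ ^ K) = coeff j (s₂ ^ K) := by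
  obtain ⟨h, hK, -⟩ := exists_pow_sub_pow_eq_X_pow_mul h₁ h₂ hr hagree K
  rw [← sub_eq_zero, ← map_sub]
  exact X_pow_dvd_iff.mp ⟨h, hK⟩ j hj

theorem coeff_pow_sub_coeff_pow {s₁ s₂ : R⟦X⟧} (h₁ : constantCoeff s₁ = 0)
    (h₂ : constantCoeff s₂ = 0) {r : ℕ} (hr : 1 ≤ r)
    (hagree : ∀ i ≤ r, coeff i s₁ = coeff i s₂) (K : ℕ) :
    coeff (K + r) (s₁ ^ K) - coeff (K + r) (s₂ ^ K)
      = K * coeff 1 s₁ ^ (K - 1) * (coeff (r + 1) s₁ - coeff (r + 1) s₂) := by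
  obtain ⟨h, hK, hh⟩ := exists_pow_sub_pow_eq_X_pow_mul h₁ h₂ hr hagree K
  rw [← map_sub, hK, ← hh]
  simpa using coeff_X_pow_mul h (K + r) 0

theorem coeff_self_pow {s : R⟦X⟧} (h₀ : constantCoeff s = 0) (K : ℕ) :
    coeff K (s ^ K) = coeff 1 s ^ K := by
  obtain ⟨t, rfl⟩ := X_dvd_iff.mpr h₀
  simpa [mul_pow, coeff_succ_X_mul] using coeff_X_pow_mul (t ^ K) K 0

theorem coeff_pow_of_mul_derivative_eq {n k : ℕ} (hn : 1 ≤ n) {s C : R⟦X⟧}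
    (heq : (k : R⟦X⟧) * s ^ (n - 1) * d⁄dX R s = (n : R⟦X⟧) * X ^ (n - 1) * C) (r : ℕ) :
    k * (n + r) * coeff (n + r) (s ^ n) = n * n * coeff r C := by
  obtain ⟨n, rfl⟩ := Nat.exists_eq_add_of_le' hn
  rw [Nat.add_sub_cancel] at heq
  have hder : (k : R⟦X⟧) * d⁄dX R (s ^ (n + 1))
      = ((n + 1 : ℕ) : R⟦X⟧) * (((n + 1 : ℕ) : R⟦X⟧) * (X ^ n * C)) := by
    rw [Derivation.leibniz_pow, Nat.add_sub_cancel, nsmul_eq_mul, smul_eq_mul]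
    linear_combination ((n + 1 : ℕ) : R⟦X⟧) * heq
  have := congrArg (coeff (r + n)) hder
  simp only [← nsmul_eq_mul, map_nsmul, coeff_X_pow_mul, coeff_derivative] at this
  rw [show n + 1 + r = r + n + 1 by omega]
  push_cast at this ⊢
  linear_combination this

end CommRing

end PowerSeries

open PowerSeries Finset

theorem coeff_pscomp_sub_coeff_pscomp {B₁ B₂ s₁ s₂ : ℂ⟦X⟧} (h₁ : constantCoeff s₁ = 0)
    (h₂ : constantCoeff s₂ = 0) {r : ℕ} (hr : 1 ≤ r)
    (hB : ∀ q < r, coeff q B₁ = coeff q B₂) (hagree : ∀ i ≤ r, coeff i s₁ = coeff i s₂) :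
    coeff r (pscomp B₁ s₁) - coeff r (pscomp B₂ s₂)
      = (coeff r B₁ - coeff r B₂) * coeff 1 s₁ ^ r := by
  rw [pscomp, pscomp, coeff_mk, coeff_mk, ← sum_sub_distrib, sum_range_succ,
    sum_eq_zero, zero_add, coeff_self_pow h₁, coeff_self_pow h₂, hagree 1 hr]
  · ring
  intro q hq
  rw [mem_range] at hq
  obtain rfl | hq₀ := q.eq_zero_or_pos
  · rw [hB 0 hr, pow_zero, pow_zero, sub_self]
  · rw [hB q hq, coeff_pow_eq_coeff_pow_of_lt h₁ h₂ hr hagree (by omega : r < q + r), sub_self]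

section Solutions

variable {n k : ℕ} {B₁ B₂ s₁ s₂ : ℂ⟦X⟧}

theorem coeff_succ_eq_iff_of_mul_derivative_eq (hn : 1 ≤ n) (hk : k ≠ 0)
    (h₁ : constantCoeff s₁ = 0) (h₂ : constantCoeff s₂ = 0) (hc : coeff 1 s₁ ≠ 0)
    (heq₁ : (k : ℂ⟦X⟧) * s₁ ^ (n - 1) * d⁄dX ℂ s₁ = (n : ℂ⟦X⟧) * X ^ (n - 1) * pscomp B₁ s₁)
    (heq₂ : (k : ℂ⟦X⟧) * s₂ ^ (n - 1) * d⁄dX ℂ s₂ = (n : ℂ⟦X⟧) * X ^ (n - 1) * pscomp B₂ s₂)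
    {r : ℕ} (hr : 1 ≤ r) (hB : ∀ q < r, coeff q B₁ = coeff q B₂)
    (hagree : ∀ i ≤ r, coeff i s₁ = coeff i s₂) :
    coeff (r + 1) s₁ = coeff (r + 1) s₂ ↔ coeff r B₁ = coeff r B₂ := by
  have key : (k * (n + r) * (n * coeff 1 s₁ ^ (n - 1))) * (coeff (r + 1) s₁ - coeff (r + 1) s₂)
      = (n * n * coeff 1 s₁ ^ r) * (coeff r B₁ - coeff r B₂) := by
    rw [mul_assoc, ← coeff_pow_sub_coeff_pow h₁ h₂ hr hagree, mul_sub,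
      coeff_pow_of_mul_derivative_eq hn heq₁, coeff_pow_of_mul_derivative_eq hn heq₂,
      ← mul_sub, coeff_pscomp_sub_coeff_pscomp h₁ h₂ hr hB hagree]
    ring
  have hn₀ : (n : ℂ) ≠ 0 := Nat.cast_ne_zero.mpr (by omega)
  have hnr : (n + r : ℂ) ≠ 0 := by exact_mod_cast (by omega : n + r ≠ 0)
  have hL : (k * (n + r) * (n * coeff 1 s₁ ^ (n - 1)) : ℂ) ≠ 0 :=
    mul_ne_zero (mul_ne_zero (Nat.cast_ne_zero.mpr hk) hnr) (mul_ne_zero hn₀ (pow_ne_zero _ hc))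
  have hR : (n * n * coeff 1 s₁ ^ r : ℂ) ≠ 0 :=
    mul_ne_zero (mul_ne_zero hn₀ hn₀) (pow_ne_zero _ hc)
  rw [← sub_eq_zero, ← sub_eq_zero (a := coeff r B₁), ← mul_eq_zero_iff_left hL, key,
    mul_eq_zero_iff_left hR]

end Solutions

theorem truncations_are_distinct_general
    (n k : ℕ) (hn : 1 ≤ n) (hk : 1 ≤ k) (B₁ B₂ : PowerSeries ℂ)
    (m : ℕ) (hm : 1 ≤ m)
    (hmne : PowerSeries.coeff m B₁ ≠ PowerSeries.coeff m B₂)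
    (hmmin : ∀ i : ℕ, i < m → PowerSeries.coeff i B₁ = PowerSeries.coeff i B₂)
    (s₁ s₂ : PowerSeries ℂ) (hs₁ : s₁.order = 1) (hs₂ : s₂.order = 1)
    (heq₁ : (k : PowerSeries ℂ) * s₁ ^ (n - 1) * s₁.derivativeFun
      = (n : PowerSeries ℂ) * PowerSeries.X ^ (n - 1) * pscomp B₁ s₁)
    (heq₂ : (k : PowerSeries ℂ) * s₂ ^ (n - 1) * s₂.derivativeFun
      = (n : PowerSeries ℂ) * PowerSeries.X ^ (n - 1) * pscomp B₂ s₂)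
    (hc1 : PowerSeries.coeff 1 s₁ = PowerSeries.coeff 1 s₂) :
    (∀ i : ℕ, i ≤ m → PowerSeries.coeff i s₁ = PowerSeries.coeff i s₂) ∧
    PowerSeries.coeff (m + 1) s₁ ≠ PowerSeries.coeff (m + 1) s₂ ∧
    (∀ j : ℕ, j < k + m → PowerSeries.coeff j (s₁ ^ k) = PowerSeries.coeff j (s₂ ^ k)) ∧
    PowerSeries.coeff (k + m) (s₁ ^ k) ≠ PowerSeries.coeff (k + m) (s₂ ^ k) := by
  obtain ⟨hc, hlow₁⟩ := order_eq_nat.mp (by exact_mod_cast hs₁ : s₁.order = (1 : ℕ))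
  have h₁ : constantCoeff s₁ = 0 := by simpa using hlow₁ 0 one_pos
  have h₂ : constantCoeff s₂ = 0 := by
    simpa using (order_eq_nat.mp (by exact_mod_cast hs₂ : s₂.order = (1 : ℕ))).2 0 one_pos
  have step := fun {r : ℕ} =>
    coeff_succ_eq_iff_of_mul_derivative_eq (r := r) hn (by omega) h₁ h₂ hc heq₁ heq₂
  have agree : ∀ i ≤ m, coeff i s₁ = coeff i s₂ := by
    intro i
    induction i using Nat.strong_induction_on with
    | _ i ih =>
      match i with
      | 0 => simp [h₁, h₂]
      | 1 => exact fun _ => hc1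
      | r + 2 => exact fun hi => (step (by omega) (fun q hq => hmmin q (by omega))
          (fun j hj => ih j (by omega) (by omega))).mpr (hmmin _ (by omega))
  have differ := mt (step hm hmmin agree).mp hmne
  refine ⟨agree, differ, fun j hj => coeff_pow_eq_coeff_pow_of_lt h₁ h₂ hm agree hj, ?_⟩
  rw [← sub_ne_zero, coeff_pow_sub_coeff_pow h₁ h₂ hm agree]
  exact mul_ne_zero (mul_ne_zero (Nat.cast_ne_zero.mpr (by omega)) (pow_ne_zero _ hc))
    (sub_ne_zero.mpr differ)

/-- Distinctness of truncations: let `B₁, B₂` share the nonzero constant term and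
first differ at index `m ≥ 1`, and let `s₁, s₂` be order-one solutions of
`k sᵢ(t)^{n-1} sᵢ'(t) = n t^{n-1} Bᵢ(sᵢ(t))` with the same first coefficient. Then
`s₁` and `s₂` agree up to index `m`, differ at index `m + 1`, and `s₁^k`, `s₂^k`
agree in all coefficients of index `< k + m` but differ at index `k + m`. -/
theorem truncations_are_distinct
    (n k : ℕ) (hn : 1 ≤ n) (hk : 1 ≤ k) (B₁ B₂ : PowerSeries ℂ)
    (hB0 : PowerSeries.constantCoeff B₁ = PowerSeries.constantCoeff B₂)
    (hB0ne : PowerSeries.constantCoeff B₁ ≠ 0)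
    (m : ℕ) (hm : 1 ≤ m)
    (hmne : PowerSeries.coeff m B₁ ≠ PowerSeries.coeff m B₂)
    (hmmin : ∀ i : ℕ, i < m → PowerSeries.coeff i B₁ = PowerSeries.coeff i B₂)
    (s₁ s₂ : PowerSeries ℂ) (hs₁ : s₁.order = 1) (hs₂ : s₂.order = 1)
    (heq₁ : (k : PowerSeries ℂ) * s₁ ^ (n - 1) * s₁.derivativeFun
      = (n : PowerSeries ℂ) * PowerSeries.X ^ (n - 1) * pscomp B₁ s₁)
    (heq₂ : (k : PowerSeries ℂ) * s₂ ^ (n - 1) * s₂.derivativeFun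
      = (n : PowerSeries ℂ) * PowerSeries.X ^ (n - 1) * pscomp B₂ s₂)
    (hc1 : PowerSeries.coeff 1 s₁ = PowerSeries.coeff 1 s₂) :
    (∀ i : ℕ, i ≤ m → PowerSeries.coeff i s₁ = PowerSeries.coeff i s₂) ∧
    PowerSeries.coeff (m + 1) s₁ ≠ PowerSeries.coeff (m + 1) s₂ ∧
    (∀ j : ℕ, j < k + m → PowerSeries.coeff j (s₁ ^ k) = PowerSeries.coeff j (s₂ ^ k)) ∧
    PowerSeries.coeff (k + m) (s₁ ^ k) ≠ PowerSeries.coeff (k + m) (s₂ ^ k) :=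
  truncations_are_distinct_general n k hn hk B₁ B₂ m hm hmne hmmin s₁ s₂ hs₁ hs₂ heq₁ heq₂ hc1
end
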